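/- arXiv:2501.07352 — 4 statements merged into one kernel-verified Lean document; each statement's English description precedes it below -/
import Mathlib

section
/- Let Γ be a locally compact second countable topological group with left Haar measure μ, and assume Γ is amenable in the sense that for every compact set A ⊆ Γ and every ε > 0 there exists a compact set B ⊆ Γ with μ(B) > 0 and μ(A·B Δ B) < ε·μ(B). Let (C_n)_{n∈ℕ} be an increasing sequence of compact subsets of Γ with the identity element contained in C_0 and ⋃_n C_n = Γ, and let (ε_n)_{n∈ℕ} be a sequence of positive reals decreasing to 0. Then there exists an increasing sequence of compact sets (B_n)_{n∈ℕ} such that for every n: C_n ⊆ B_n, μ(B_{n+1}) > 0, and μ(B_n·B_{n+1} Δ B_{n+1}) < ε_n·μ(B_{n+1}). -/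
open MeasureTheory
open scoped Pointwise symmDiff

/-- Right-translating a set multiplies its Haar measure by a fixed positive finite constant;
consequently the Følner ratio condition is preserved under right translation. -/
lemma foelner_translate
    {Γ : Type*} [Group Γ] [TopologicalSpace Γ] [IsTopologicalGroup Γ]
    [LocallyCompactSpace Γ] [SecondCountableTopology Γ]
    [MeasurableSpace Γ] [BorelSpace Γ]
    (μ : Measure Γ) [μ.IsHaarMeasure] (b : Γ) :
    ∃ c : NNReal, 0 < c ∧ ∀ S : Set Γ, μ (S * ({b⁻¹} : Set Γ)) = (c : ENNReal) * μ S := by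
  set ν : Measure Γ := μ.map (· * b) with hν
  have hmap : ∀ S : Set Γ, ν S = μ (S * ({b⁻¹} : Set Γ)) := by
    intro S
    rw [hν, (measurableEmbedding_mulRight b).map_apply]
    congr 1
    rw [Set.mul_singleton, Set.image_mul_right']
  have hHaar : ν.IsHaarMeasure := by
    rw [hν]; infer_instance
  have heq : ν = (Measure.haarScalarFactor ν μ : ENNReal) • μ :=
    Measure.isMulLeftInvariant_eq_smul ν μ
  refine ⟨Measure.haarScalarFactor ν μ, Measure.haarScalarFactor_pos_of_isHaarMeasure ν μ, ?_⟩
  intro S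
  rw [← hmap S]
  conv_lhs => rw [heq]
  simp

/-- One step of the Følner sequence construction: given a compact set `A` containing `1`,
produce a compact Følner-type set `D` containing `A`. -/
lemma foelner_step
    {Γ : Type*} [Group Γ] [TopologicalSpace Γ] [IsTopologicalGroup Γ]
    [LocallyCompactSpace Γ] [SecondCountableTopology Γ]
    [MeasurableSpace Γ] [BorelSpace Γ]
    (μ : Measure Γ) [μ.IsHaarMeasure]
    (hamen : ∀ A : Set Γ, IsCompact A → ∀ ε : ℝ, 0 < ε →
      ∃ B : Set Γ, IsCompact B ∧ 0 < μ B ∧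
        μ ((A * B) ∆ B) < ENNReal.ofReal ε * μ B)
    (A : Set Γ) (hA : IsCompact A) (h1 : (1 : Γ) ∈ A) (e : ℝ) (he : 0 < e) :
    ∃ D : Set Γ, IsCompact D ∧ A ⊆ D ∧ 0 < μ D ∧
      μ ((A * D) ∆ D) < ENNReal.ofReal e * μ D := by
  obtain ⟨B, hBc, hBpos, hBf⟩ := hamen (A * A) (hA.mul hA) e he
  obtain ⟨b, hb⟩ := nonempty_of_measure_ne_zero hBpos.ne'
  obtain ⟨c, hc, hcS⟩ := foelner_translate μ b
  set B2 : Set Γ := B * ({b⁻¹} : Set Γ) with hB2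
  have h1B2 : (1 : Γ) ∈ B2 := by
    rw [hB2]
    exact ⟨b, hb, b⁻¹, rfl, mul_inv_cancel b⟩
  have hB2c : IsCompact B2 := hBc.mul isCompact_singleton
  have hB2pos : 0 < μ B2 := by
    rw [hB2, hcS B]
    exact ENNReal.mul_pos (by exact_mod_cast hc.ne') hBpos.ne'
  -- Translated Følner condition
  have hf2 : μ ((A * A * B2) ∆ B2) < ENNReal.ofReal e * μ B2 := by
    have himg : (A * A * B2) ∆ B2 = ((A * A * B) ∆ B) * ({b⁻¹} : Set Γ) := by
      rw [hB2, ← mul_assoc, Set.mul_singleton, Set.mul_singleton, Set.mul_singleton,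
        Set.image_symmDiff (mul_left_injective b⁻¹)]
    rw [himg, hcS, hB2, hcS B]
    rw [← mul_assoc (ENNReal.ofReal e) (c : ENNReal) (μ B),
      mul_comm (ENNReal.ofReal e) (c : ENNReal), mul_assoc (c : ENNReal) (ENNReal.ofReal e) (μ B)]
    exact (ENNReal.mul_lt_mul_iff_right (a := (c : ENNReal)) (by exact_mod_cast hc.ne') ENNReal.coe_ne_top).mpr hBf
  refine ⟨A * B2, hA.mul hB2c, Set.subset_mul_left A h1B2, ?_, ?_⟩
  · exact lt_of_lt_of_le hB2pos (measure_mono (Set.subset_mul_right B2 h1))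
  · have hsub : (A * (A * B2)) ∆ (A * B2) ⊆ (A * A * B2) ∆ B2 := by
      have hD1 : A * B2 ⊆ A * (A * B2) :=
        Set.subset_mul_right (A * B2) h1
      have hB2D : B2 ⊆ A * B2 := Set.subset_mul_right B2 h1
      rw [symmDiff_of_ge hD1]
      intro x hx
      rw [Set.mem_diff] at hx
      have hx1 : x ∈ A * A * B2 := by rw [mul_assoc]; exact hx.1
      have hx2 : x ∉ B2 := fun h => hx.2 (hB2D h)
      rw [Set.mem_symmDiff]
      exact Or.inl ⟨hx1, hx2⟩
    calc μ ((A * (A * B2)) ∆ (A * B2)) ≤ μ ((A * A * B2) ∆ B2) := measure_mono hsub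
      _ < ENNReal.ofReal e * μ B2 := hf2
      _ ≤ ENNReal.ofReal e * μ (A * B2) := by
          exact mul_le_mul_right (measure_mono (Set.subset_mul_right B2 h1)) _

theorem foelner_sequence_of_amenable
    {Γ : Type*} [Group Γ] [TopologicalSpace Γ] [IsTopologicalGroup Γ]
    [LocallyCompactSpace Γ] [SecondCountableTopology Γ]
    [MeasurableSpace Γ] [BorelSpace Γ]
    (μ : Measure Γ) [μ.IsHaarMeasure]
    (hamen : ∀ A : Set Γ, IsCompact A → ∀ ε : ℝ, 0 < ε →
      ∃ B : Set Γ, IsCompact B ∧ 0 < μ B ∧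
        μ ((A * B) ∆ B) < ENNReal.ofReal ε * μ B)
    (C : ℕ → Set Γ) (hCcpt : ∀ n, IsCompact (C n))
    (hCmono : ∀ n, C n ⊆ C (n + 1))
    (hC0 : (1 : Γ) ∈ C 0) (hCunion : ⋃ n, C n = Set.univ)
    (ε : ℕ → ℝ) (hεpos : ∀ n, 0 < ε n) (hεanti : ∀ n, ε (n + 1) ≤ ε n)
    (hεlim : Filter.Tendsto ε Filter.atTop (nhds 0)) :
    ∃ B : ℕ → Set Γ, (∀ n, IsCompact (B n)) ∧ (∀ n, B n ⊆ B (n + 1)) ∧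
      (∀ n, C n ⊆ B n) ∧ (∀ n, 0 < μ (B (n + 1))) ∧
      ∀ n, μ ((B n * B (n + 1)) ∆ B (n + 1)) < ENNReal.ofReal (ε n) * μ (B (n + 1)) := by
  have key : ∀ (A : Set Γ) (e : ℝ), ∃ D : Set Γ,
      IsCompact A → (1 : Γ) ∈ A → 0 < e →
      (IsCompact D ∧ A ⊆ D ∧ 0 < μ D ∧
        μ ((A * D) ∆ D) < ENNReal.ofReal e * μ D) := by
    intro A e
    by_cases h : IsCompact A ∧ (1 : Γ) ∈ A ∧ 0 < e
    · obtain ⟨D, hD⟩ := foelner_step μ hamen A h.1 h.2.1 e h.2.2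
      exact ⟨D, fun _ _ _ => hD⟩
    · exact ⟨∅, fun h1 h2 h3 => absurd ⟨h1, h2, h3⟩ h⟩
  choose f hf using key
  set B : ℕ → Set Γ := fun n => Nat.rec (C 0) (fun n Bn => f (Bn ∪ C (n + 1)) (ε n)) n with hB
  have hBsucc : ∀ n, B (n + 1) = f (B n ∪ C (n + 1)) (ε n) := fun n => rfl
  have h1C : ∀ n, (1 : Γ) ∈ C n := by
    intro n
    induction n with
    | zero => exact hC0
    | succ n ih => exact hCmono n ih
  have main : ∀ n, IsCompact (B n) ∧ C n ⊆ B n := by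
    intro n
    induction n with
    | zero => exact ⟨hCcpt 0, subset_rfl⟩
    | succ n ih =>
      have hAc : IsCompact (B n ∪ C (n + 1)) := ih.1.union (hCcpt (n + 1))
      have h1A : (1 : Γ) ∈ B n ∪ C (n + 1) := Or.inl (ih.2 (h1C n))
      have := hf (B n ∪ C (n + 1)) (ε n) hAc h1A (hεpos n)
      rw [← hBsucc n] at this
      exact ⟨this.1, fun x hx => this.2.1 (Or.inr hx)⟩
  have hstep : ∀ n, IsCompact (B (n + 1)) ∧ (B n ∪ C (n + 1)) ⊆ B (n + 1) ∧
      0 < μ (B (n + 1)) ∧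
      μ (((B n ∪ C (n + 1)) * B (n + 1)) ∆ B (n + 1)) <
        ENNReal.ofReal (ε n) * μ (B (n + 1)) := by
    intro n
    have hAc : IsCompact (B n ∪ C (n + 1)) := (main n).1.union (hCcpt (n + 1))
    have h1A : (1 : Γ) ∈ B n ∪ C (n + 1) := Or.inl ((main n).2 (h1C n))
    have := hf (B n ∪ C (n + 1)) (ε n) hAc h1A (hεpos n)
    rw [← hBsucc n] at this
    exact this
  refine ⟨B, fun n => (main n).1, fun n => fun x hx => (hstep n).2.1 (Or.inl hx),
    fun n => (main n).2, fun n => (hstep n).2.2.1, fun n => ?_⟩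
  have h1B : (1 : Γ) ∈ B n := (main n).2 (h1C n)
  have hsub : (B n * B (n + 1)) ∆ B (n + 1) ⊆
      ((B n ∪ C (n + 1)) * B (n + 1)) ∆ B (n + 1) := by
    have hD1 : B (n + 1) ⊆ B n * B (n + 1) := Set.subset_mul_right _ h1B
    have hD2 : B n * B (n + 1) ⊆ (B n ∪ C (n + 1)) * B (n + 1) :=
      Set.mul_subset_mul_right Set.subset_union_left
    rw [symmDiff_of_ge hD1]
    intro x hx
    rw [Set.mem_diff] at hx
    rw [Set.mem_symmDiff]
    exact Or.inl ⟨hD2 hx.1, hx.2⟩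
  exact lt_of_le_of_lt (measure_mono hsub) (hstep n).2.2.2
end

section
/- Let G be a connected, countable, locally finite graph, and let (x, x') and (y, y') be edges of G. Suppose that for every n ∈ ℕ there is a graph isomorphism from the induced subgraph of G on B_n(x) ∪ B_n(x') to the induced subgraph of G on B_n(y) ∪ B_n(y') which sends x to y and x' to y'. Then there exists an automorphism φ of G with φ(x) = y and φ(x') = y'. -/
/-- The ball of radius `n` around `v` in the graph `H`. -/
def gball {V : Type*} (H : SimpleGraph V) (v : V) (n : ℕ) : Set V :=
  {u | H.Reachable v u ∧ H.dist v u ≤ n}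

lemma self_mem_gball {V : Type*} (H : SimpleGraph V) (v : V) (n : ℕ) :
    v ∈ gball H v n :=
  ⟨SimpleGraph.Reachable.refl v, by simp [SimpleGraph.dist_self]⟩

open CategoryTheory Opposite

namespace AutoOfBalls

variable {V : Type*} (G : SimpleGraph V)

lemma gball_mono {v : V} {m n : ℕ} (h : m ≤ n) : gball G v m ⊆ gball G v n :=
  fun _ hu => ⟨hu.1, hu.2.trans h⟩

lemma gball_finite (hlf : ∀ v : V, (G.neighborSet v).Finite) :
    ∀ (n : ℕ) (v : V), (gball G v n).Finite := by
  intro n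
  induction n with
  | zero =>
    intro v
    apply Set.Finite.subset (Set.finite_singleton v)
    rintro u ⟨hr, hd⟩
    simp only [Nat.le_zero] at hd
    exact (hr.dist_eq_zero_iff.mp hd).symm
  | succ n ih =>
    intro v
    apply Set.Finite.subset
      ((Set.finite_singleton v).union ((hlf v).biUnion (fun w _ => ih w)))
    rintro u ⟨hr, hd⟩
    obtain ⟨p, hp⟩ := hr.exists_walk_length_eq_dist
    cases p with
    | nil => exact Or.inl rfl
    | @cons _ w _ hadj q =>
      refine Or.inr (Set.mem_biUnion hadj ⟨⟨q⟩, ?_⟩)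
      rw [SimpleGraph.Walk.length_cons] at hp
      have hdl := SimpleGraph.dist_le q
      omega

/-- The union of the two balls around `x` and `x'`. -/
def UU (x x' : V) (n : ℕ) : Set V := gball G x n ∪ gball G x' n

lemma UU_mono {x x' : V} {m n : ℕ} (h : m ≤ n) : UU G x x' m ⊆ UU G x x' n :=
  Set.union_subset_union (gball_mono G h) (gball_mono G h)

lemma left_mem_UU (x x' : V) (n : ℕ) : x ∈ UU G x x' n :=
  Or.inl (self_mem_gball G x n)

lemma right_mem_UU (x x' : V) (n : ℕ) : x' ∈ UU G x x' n :=
  Or.inr (self_mem_gball G x' n)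

/-- The type of pinned partial isomorphisms at level `n`. -/
def SS (x x' y y' : V) (n : ℕ) : Type _ :=
  {f : (UU G x x' n) ≃ (UU G y y' n) //
    (∀ a b : UU G x x' n, G.Adj a b ↔ G.Adj (f a) (f b)) ∧
    (↑(f ⟨x, left_mem_UU G x x' n⟩) : V) = y ∧
    (↑(f ⟨x', right_mem_UU G x x' n⟩) : V) = y'}

/-- Mapping a walk whose support lies in `U` through an adjacency-preserving map. -/
lemma walk_map {U : Set V} (f : U → V)
    (hf : ∀ a b : U, G.Adj a b → G.Adj (f a) (f b)) :
    ∀ {a u : V} (p : G.Walk a u) (hp : ∀ w ∈ p.support, w ∈ U),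
      ∃ q : G.Walk (f ⟨a, hp a p.start_mem_support⟩) (f ⟨u, hp u p.end_mem_support⟩),
        q.length = p.length := by
  intro a u p
  induction p with
  | nil => exact fun hp => ⟨SimpleGraph.Walk.nil, rfl⟩
  | @cons a b u h q ih =>
    intro hp
    have ha : a ∈ U := hp a (by simp)
    have hb : b ∈ U := hp b (by simp [SimpleGraph.Walk.support_cons])
    obtain ⟨q', hq'⟩ := ih (fun w hw => hp w (by simp [SimpleGraph.Walk.support_cons, hw]))
    exact ⟨SimpleGraph.Walk.cons (hf ⟨a, ha⟩ ⟨b, hb⟩ h) q', by simp [hq']⟩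

variable (x x' y y' : V)

lemma mem_target {k N : ℕ} (hkN : k ≤ N) (f : SS G x x' y y' N) {u : V}
    (hu : u ∈ UU G x x' k) :
    (↑(f.1 ⟨u, UU_mono G hkN hu⟩) : V) ∈ UU G y y' k := by
  classical
  obtain ⟨hr, hd⟩ | ⟨hr, hd⟩ := hu
  · obtain ⟨p, hp⟩ := hr.exists_walk_length_eq_dist
    have hsupp : ∀ w ∈ p.support, w ∈ UU G x x' N := by
      intro w hw
      refine Or.inl ⟨⟨p.takeUntil w hw⟩, ?_⟩
      calc G.dist x w ≤ (p.takeUntil w hw).length := SimpleGraph.dist_le _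
        _ ≤ p.length := SimpleGraph.Walk.length_takeUntil_le p hw
        _ ≤ N := by rw [hp]; exact hd.trans hkN
    obtain ⟨q, hq⟩ :=
      walk_map G (fun v => (↑(f.1 v) : V)) (fun a b hab => (f.2.1 a b).mp hab) p hsupp
    have hy : (↑(f.1 ⟨x, hsupp x p.start_mem_support⟩) : V) = y := f.2.2.1
    have hql : q.length ≤ k := by rw [hq, hp]; exact hd
    have h1 : G.Reachable (↑(f.1 ⟨x, hsupp x p.start_mem_support⟩) : V)
        (↑(f.1 ⟨u, hsupp u p.end_mem_support⟩) : V) := ⟨q⟩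
    have h2 := (SimpleGraph.dist_le q).trans hql
    rw [hy] at h1 h2
    exact Or.inl ⟨h1, h2⟩
  · obtain ⟨p, hp⟩ := hr.exists_walk_length_eq_dist
    have hsupp : ∀ w ∈ p.support, w ∈ UU G x x' N := by
      intro w hw
      refine Or.inr ⟨⟨p.takeUntil w hw⟩, ?_⟩
      calc G.dist x' w ≤ (p.takeUntil w hw).length := SimpleGraph.dist_le _
        _ ≤ p.length := SimpleGraph.Walk.length_takeUntil_le p hw
        _ ≤ N := by rw [hp]; exact hd.trans hkN
    obtain ⟨q, hq⟩ :=
      walk_map G (fun v => (↑(f.1 v) : V)) (fun a b hab => (f.2.1 a b).mp hab) p hsupp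
    have hy : (↑(f.1 ⟨x', hsupp x' p.start_mem_support⟩) : V) = y' := f.2.2.2
    have hql : q.length ≤ k := by rw [hq, hp]; exact hd
    have h1 : G.Reachable (↑(f.1 ⟨x', hsupp x' p.start_mem_support⟩) : V)
        (↑(f.1 ⟨u, hsupp u p.end_mem_support⟩) : V) := ⟨q⟩
    have h2 := (SimpleGraph.dist_le q).trans hql
    rw [hy] at h1 h2
    exact Or.inr ⟨h1, h2⟩

/-- The inverse of a pinned partial isomorphism. -/
def symmSS {n : ℕ} (f : SS G x x' y y' n) : SS G y y' x x' n :=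
  ⟨f.1.symm, by
    refine ⟨fun a b => ?_, ?_, ?_⟩
    · have h := f.2.1 (f.1.symm a) (f.1.symm b)
      rw [Equiv.apply_symm_apply, Equiv.apply_symm_apply] at h
      exact h.symm
    · have hyx : (⟨y, left_mem_UU G y y' n⟩ : UU G y y' n)
          = f.1 ⟨x, left_mem_UU G x x' n⟩ := (Subtype.ext f.2.2.1).symm
      rw [hyx, Equiv.symm_apply_apply]
    · have hyx : (⟨y', right_mem_UU G y y' n⟩ : UU G y y' n)
          = f.1 ⟨x', right_mem_UU G x x' n⟩ := (Subtype.ext f.2.2.2).symm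
      rw [hyx, Equiv.symm_apply_apply]⟩

/-- Restriction of a pinned partial isomorphism to a smaller ball. -/
def resSS {k N : ℕ} (hkN : k ≤ N) (f : SS G x x' y y' N) : SS G x x' y y' k :=
  ⟨{ toFun := fun u => ⟨↑(f.1 ⟨u.1, UU_mono G hkN u.2⟩), mem_target G x x' y y' hkN f u.2⟩
     invFun := fun w => ⟨↑(f.1.symm ⟨w.1, UU_mono G hkN w.2⟩),
        mem_target G y y' x x' hkN (symmSS G x x' y y' f) w.2⟩
     left_inv := fun u => by
       apply Subtype.ext
       show (↑(f.1.symm ⟨↑(f.1 ⟨u.1, UU_mono G hkN u.2⟩), _⟩) : V) = u.1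
       rw [Subtype.coe_eta, Equiv.symm_apply_apply]
     right_inv := fun w => by
       apply Subtype.ext
       show (↑(f.1 ⟨↑(f.1.symm ⟨w.1, UU_mono G hkN w.2⟩), _⟩) : V) = w.1
       rw [Subtype.coe_eta, Equiv.apply_symm_apply] },
   fun a b => f.2.1 ⟨a.1, UU_mono G hkN a.2⟩ ⟨b.1, UU_mono G hkN b.2⟩,
   f.2.2.1, f.2.2.2⟩

/-- The inverse system of pinned partial isomorphisms. -/
def FF : ℕᵒᵖ ⥤ Type _ where
  obj n := SS G x x' y y' n.unop
  map g := TypeCat.ofHom (resSS G x x' y y' (leOfHom g.unop))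
  map_id n := ConcreteCategory.hom_ext _ _ fun f => Subtype.ext (Equiv.ext fun u => Subtype.ext rfl)
  map_comp g g' := ConcreteCategory.hom_ext _ _ fun f => Subtype.ext (Equiv.ext fun u => Subtype.ext rfl)

end AutoOfBalls

open AutoOfBalls

theorem automorphism_of_edge_ball_isos
    {V : Type*} [Countable V] (G : SimpleGraph V) (hconn : G.Connected)
    (hlf : ∀ v : V, (G.neighborSet v).Finite) (x x' y y' : V)
    (hxx' : G.Adj x x') (hyy' : G.Adj y y')
    (h : ∀ n : ℕ, ∃ φ : G.induce (gball G x n ∪ gball G x' n) ≃g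
        G.induce (gball G y n ∪ gball G y' n),
      φ ⟨x, Set.mem_union_left _ (self_mem_gball G x n)⟩ =
        ⟨y, Set.mem_union_left _ (self_mem_gball G y n)⟩ ∧
      φ ⟨x', Set.mem_union_right _ (self_mem_gball G x' n)⟩ =
        ⟨y', Set.mem_union_right _ (self_mem_gball G y' n)⟩) :
    ∃ φ : G ≃g G, φ x = y ∧ φ x' = y' := by
  classical
  haveI hFin : ∀ n : ℕᵒᵖ, Finite ((FF G x x' y y').obj n) := by
    intro n
    have hU' : (UU G y y' n.unop).Finite :=
      (gball_finite G hlf n.unop y).union (gball_finite G hlf n.unop y')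
    haveI := hU'.to_subtype
    exact Subtype.finite
  haveI hNe : ∀ n : ℕᵒᵖ, Nonempty ((FF G x x' y y').obj n) := by
    intro n
    obtain ⟨φ, h1, h2⟩ := h n.unop
    exact ⟨⟨φ.toEquiv, fun a b => (φ.map_adj_iff).symm,
      congrArg Subtype.val h1, congrArg Subtype.val h2⟩⟩
  obtain ⟨s, hs⟩ := nonempty_sections_of_finite_inverse_system (FF G x x' y y')
  -- compatibility of the section across levels
  have compat : ∀ {k N : ℕ} (hkN : k ≤ N) {u : V} (hu : u ∈ UU G x x' k),
      (↑((s (op k)).1 ⟨u, hu⟩) : V) = ↑((s (op N)).1 ⟨u, UU_mono G hkN hu⟩) := by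
    intro k N hkN u hu
    rw [← hs ((homOfLE hkN).op)]
    rfl
  have compat' : ∀ {k N : ℕ} (hkN : k ≤ N) {w : V} (hw : w ∈ UU G y y' k),
      (↑((s (op k)).1.symm ⟨w, hw⟩) : V) = ↑((s (op N)).1.symm ⟨w, UU_mono G hkN hw⟩) := by
    intro k N hkN w hw
    rw [← hs ((homOfLE hkN).op)]
    rfl
  have hmemX : ∀ v : V, v ∈ UU G x x' (G.dist x v) :=
    fun v => Or.inl ⟨hconn.preconnected x v, le_rfl⟩
  have hmemY : ∀ v : V, v ∈ UU G y y' (G.dist y v) :=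
    fun v => Or.inl ⟨hconn.preconnected y v, le_rfl⟩
  set Φ : V → V := fun v => ↑((s (op (G.dist x v))).1 ⟨v, hmemX v⟩) with hΦdef
  set Ψ : V → V := fun v => ↑((s (op (G.dist y v))).1.symm ⟨v, hmemY v⟩) with hΨdef
  have ΦatLevel : ∀ (N : ℕ) (v : V) (hv : v ∈ UU G x x' N),
      Φ v = ↑((s (op N)).1 ⟨v, hv⟩) := by
    intro N v hv
    exact (compat (le_max_left (G.dist x v) N) (hmemX v)).trans
      (compat (le_max_right (G.dist x v) N) hv).symm
  have ΨatLevel : ∀ (N : ℕ) (v : V) (hv : v ∈ UU G y y' N),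
      Ψ v = ↑((s (op N)).1.symm ⟨v, hv⟩) := by
    intro N v hv
    exact (compat' (le_max_left (G.dist y v) N) (hmemY v)).trans
      (compat' (le_max_right (G.dist y v) N) hv).symm
  have hΨΦ : ∀ v : V, Ψ (Φ v) = v := by
    intro v
    have hΦv : Φ v ∈ UU G y y' (G.dist x v) := ((s (op (G.dist x v))).1 ⟨v, hmemX v⟩).2
    rw [ΨatLevel (G.dist x v) (Φ v) hΦv]
    exact congrArg Subtype.val ((s (op (G.dist x v))).1.symm_apply_apply ⟨v, hmemX v⟩)
  have hΦΨ : ∀ v : V, Φ (Ψ v) = v := by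
    intro v
    have hΨv : Ψ v ∈ UU G x x' (G.dist y v) := ((s (op (G.dist y v))).1.symm ⟨v, hmemY v⟩).2
    rw [ΦatLevel (G.dist y v) (Ψ v) hΨv]
    exact congrArg Subtype.val ((s (op (G.dist y v))).1.apply_symm_apply ⟨v, hmemY v⟩)
  have hadj : ∀ a b : V, G.Adj (Φ a) (Φ b) ↔ G.Adj a b := by
    intro a b
    set N := max (G.dist x a) (G.dist x b) with hN
    rw [ΦatLevel N a (UU_mono G (le_max_left _ _) (hmemX a)),
      ΦatLevel N b (UU_mono G (le_max_right _ _) (hmemX b))]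
    exact ((s (op N)).2.1 ⟨a, UU_mono G (le_max_left _ _) (hmemX a)⟩
      ⟨b, UU_mono G (le_max_right _ _) (hmemX b)⟩).symm
  refine ⟨⟨⟨Φ, Ψ, hΨΦ, hΦΨ⟩, @fun a b => hadj a b⟩, ?_, ?_⟩
  · show Φ x = y
    rw [ΦatLevel 0 x (left_mem_UU G x x' 0)]
    exact (s (op 0)).2.2.1
  · show Φ x' = y'
    rw [ΦatLevel 0 x' (right_mem_UU G x x' 0)]
    exact (s (op 0)).2.2.2
end

section
/- Let F be a finite simple graph that admits a perfect matching. Then F admits a fractional perfect matching f such that: (i) f(γ u, γ v) = f(u, v) for every automorphism γ of F and all vertices u, v; and (ii) for every edge (u,v) of F, f(u,v) > 0 if and only if the edge (u,v) belongs to some perfect matching of F. -/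
/-- A fractional perfect matching of a simple graph `G`. -/
def IsFPM {V : Type*} (G : SimpleGraph V) (f : V → V → ℝ) : Prop :=
  (∀ u v, f u v = f v u) ∧
  (∀ u v, 0 ≤ f u v ∧ f u v ≤ 1) ∧
  (∀ u v, ¬ G.Adj u v → f u v = 0) ∧
  (∀ v, ∑ᶠ u ∈ G.neighborSet v, f v u = 1)

theorem invariant_fpm_positive_on_kernel {V : Type*} [Fintype V] (F : SimpleGraph V)
    (hpm : ∃ M : F.Subgraph, M.IsPerfectMatching) :
    ∃ f : V → V → ℝ, IsFPM F f ∧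
      (∀ (γ : F ≃g F) (u v : V), f (γ u) (γ v) = f u v) ∧
      (∀ u v : V, F.Adj u v →
        (0 < f u v ↔ ∃ M : F.Subgraph, M.IsPerfectMatching ∧ M.Adj u v)) := by
  classical
  have hfin : Finite F.Subgraph := by
    apply Finite.of_injective (fun M => (M.verts, M.Adj))
    intro M N h
    rw [Prod.ext_iff] at h
    exact SimpleGraph.Subgraph.ext h.1 h.2
  have : Fintype F.Subgraph := Fintype.ofFinite _
  set PMs : Finset F.Subgraph :=
    Finset.univ.filter (fun M => M.IsPerfectMatching) with hPMs
  have hmem : ∀ M : F.Subgraph, M ∈ PMs ↔ M.IsPerfectMatching := by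
    intro M; simp [hPMs]
  obtain ⟨M₀, hM₀⟩ := hpm
  have hne : PMs.Nonempty := ⟨M₀, (hmem M₀).2 hM₀⟩
  have hnpos : (0 : ℝ) < (PMs.card : ℝ) := by
    exact_mod_cast Finset.card_pos.2 hne
  set n : ℝ := (PMs.card : ℝ) with hn
  set f : V → V → ℝ :=
    fun u v => (∑ M ∈ PMs, if M.Adj u v then (1 : ℝ) else 0) / n with hf
  -- basic bounds
  have hterm_nonneg : ∀ (u v : V) (M : F.Subgraph),
      (0 : ℝ) ≤ if M.Adj u v then (1 : ℝ) else 0 := by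
    intro u v M; split <;> norm_num
  have hsum_nonneg : ∀ u v : V,
      (0 : ℝ) ≤ ∑ M ∈ PMs, if M.Adj u v then (1 : ℝ) else 0 :=
    fun u v => Finset.sum_nonneg fun M _ => hterm_nonneg u v M
  -- inner sum over neighbours is 1 for a perfect matching
  have hinner : ∀ (v : V) (M : F.Subgraph), M ∈ PMs →
      (∑ u ∈ (F.neighborSet v).toFinset, if M.Adj v u then (1 : ℝ) else 0) = 1 := by
    intro v M hM
    have hpmM := (hmem M).1 hM
    obtain ⟨w, hw, hwuniq⟩ :=
      (SimpleGraph.Subgraph.isPerfectMatching_iff.1 hpmM) v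
    have hwmem : w ∈ (F.neighborSet v).toFinset := by
      rw [Set.mem_toFinset]
      exact M.adj_sub hw
    have : (∑ u ∈ (F.neighborSet v).toFinset, if M.Adj v u then (1 : ℝ) else 0)
        = ∑ u ∈ (F.neighborSet v).toFinset, if u = w then (1 : ℝ) else 0 := by
      apply Finset.sum_congr rfl
      intro u _
      congr 1
      simp only [eq_iff_iff]
      constructor
      · exact fun h => hwuniq u h
      · rintro rfl; exact hw
    rw [this, Finset.sum_ite_eq' _ w, if_pos hwmem]
  refine ⟨f, ⟨?_, ?_, ?_, ?_⟩, ?_, ?_⟩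
  · -- symmetry
    intro u v
    simp only [hf]
    congr 1
    apply Finset.sum_congr rfl
    intro M _
    congr 1
    simp only [eq_iff_iff]
    exact ⟨fun h => M.adj_symm h, fun h => M.adj_symm h⟩
  · -- bounds
    intro u v
    constructor
    · exact div_nonneg (hsum_nonneg u v) hnpos.le
    · rw [div_le_one hnpos]
      calc (∑ M ∈ PMs, if M.Adj u v then (1 : ℝ) else 0)
          ≤ ∑ M ∈ PMs, (1 : ℝ) := by
            apply Finset.sum_le_sum; intro M _; split <;> norm_num
        _ = n := by simp [hn]
  · -- zero off edges
    intro u v huv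
    simp only [hf]
    have : (∑ M ∈ PMs, if M.Adj u v then (1 : ℝ) else 0) = 0 := by
      apply Finset.sum_eq_zero
      intro M _
      rw [if_neg]
      exact fun h => huv (M.adj_sub h)
    rw [this, zero_div]
  · -- degree condition
    intro v
    rw [← Set.coe_toFinset (F.neighborSet v), finsum_mem_coe_finset]
    simp only [hf]
    rw [← Finset.sum_div, Finset.sum_comm]
    rw [Finset.sum_congr rfl (fun M hM => hinner v M hM)]
    simp [hn]
    exact hne.ne_empty
  · -- automorphism invariance
    intro γ u v
    simp only [hf]
    congr 1
    have hcomp : ∀ (δ : F ≃g F) (M : F.Subgraph),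
        (M.map δ.toHom).map δ.symm.toHom = M := by
      intro δ M
      rw [← SimpleGraph.Subgraph.map_comp]
      have : δ.symm.toHom.comp δ.toHom = SimpleGraph.Hom.id := by
        ext x
        exact δ.symm_apply_apply x
      rw [this, SimpleGraph.Subgraph.map_id]
    have hmemmap : ∀ (δ : F ≃g F) (M : F.Subgraph), M ∈ PMs →
        M.map δ.toHom ∈ PMs := by
      intro δ M hM
      obtain ⟨hMm, hMs⟩ := (hmem M).1 hM
      rw [hmem]
      constructor
      · exact hMm.map δ.toHom δ.injective
      · intro x
        simp only [SimpleGraph.Subgraph.map_verts]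
        exact ⟨δ.symm x, hMs _, δ.apply_symm_apply x⟩
    apply Finset.sum_nbij' (fun M => M.map γ.symm.toHom) (fun M => M.map γ.toHom)
    · intro M hM; exact hmemmap γ.symm M hM
    · intro M hM; exact hmemmap γ M hM
    · intro M _; exact hcomp γ.symm M
    · intro M _; exact hcomp γ M
    · intro M _
      congr 1
      rw [eq_iff_iff, SimpleGraph.Subgraph.map_adj]
      constructor
      · intro h
        exact ⟨γ u, γ v, h, γ.symm_apply_apply u, γ.symm_apply_apply v⟩
      · rintro ⟨a, b, hab, ha, hb⟩
        have ha' : a = γ u := by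
          have := congrArg γ ha
          simpa using this
        have hb' : b = γ v := by
          have := congrArg γ hb
          simpa using this
        rw [ha', hb'] at hab
        exact hab
  · -- positivity
    intro u v _
    constructor
    · intro hpos
      by_contra hno
      push_neg at hno
      have : (∑ M ∈ PMs, if M.Adj u v then (1 : ℝ) else 0) = 0 := by
        apply Finset.sum_eq_zero
        intro M hM
        rw [if_neg]
        exact fun h => hno M ((hmem M).1 hM) h
      simp only [hf, this, zero_div, lt_self_iff_false] at hpos
    · rintro ⟨M, hMpm, hMadj⟩
      apply div_pos _ hnpos
      have h1 : (1 : ℝ) ≤ ∑ N ∈ PMs, if N.Adj u v then (1 : ℝ) else 0 := by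
        have := Finset.single_le_sum (f := fun N : F.Subgraph =>
          if N.Adj u v then (1 : ℝ) else 0)
          (fun N _ => hterm_nonneg u v N) ((hmem M).2 hMpm)
        simpa [hMadj] using this
      linarith
end

section
/- Let G be an infinite, connected, locally finite graph with polynomial growth: there are constants C, d such that for every vertex v and every n ∈ ℕ the ball B_n(v) has at most C·(n+1)^d elements. Then G is amenable: for every ε > 0 there exists a finite nonempty connected set S of vertices with |∂S| < ε·|S|. -/
/-- The (outer vertex) boundary of a set of vertices. -/
def graphBoundary {V : Type*} (H : SimpleGraph V) (S : Set V) : Set V :=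
  {u | u ∉ S ∧ ∃ v ∈ S, H.Adj u v}

/-- A locally finite graph is amenable if it has finite nonempty connected vertex
sets with arbitrarily small boundary-to-size ratio. -/
def GraphAmenable {V : Type*} (H : SimpleGraph V) : Prop :=
  ∀ ε : ℝ, 0 < ε → ∃ S : Set V, S.Finite ∧ S.Nonempty ∧ (H.induce S).Connected ∧
    ((graphBoundary H S).ncard : ℝ) < ε * S.ncard

open SimpleGraph Set Filter

lemma exists_adj_of_dist_eq {V : Type*} {G : SimpleGraph V} {v u : V} {n : ℕ}
    (hr : G.Reachable v u) (hd : G.dist v u = n + 1) :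
    ∃ w, G.Adj u w ∧ G.Reachable v w ∧ G.dist v w ≤ n := by
  obtain ⟨p, hp⟩ := hr.exists_walk_length_eq_dist
  have hnil : ¬ p.reverse.Nil := by
    rw [SimpleGraph.Walk.not_nil_iff_lt_length]
    simp [hp, hd]
  obtain ⟨w, h, q, hq⟩ := SimpleGraph.Walk.not_nil_iff.mp hnil
  have hlen : q.length = n := by
    have := congrArg SimpleGraph.Walk.length hq
    simp [hp, hd] at this
    omega
  refine ⟨w, h, q.reverse.reachable, ?_⟩
  have := SimpleGraph.dist_le q.reverse
  simpa [hlen] using this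

lemma mem_gball_self {V : Type*} (G : SimpleGraph V) (v : V) (n : ℕ) :
    v ∈ gball G v n := ⟨Reachable.refl v, by simp [SimpleGraph.dist_self]⟩

lemma gball_finite {V : Type*} {G : SimpleGraph V}
    (hlf : ∀ v : V, (G.neighborSet v).Finite) (v : V) :
    ∀ n, (gball G v n).Finite := by
  intro n
  induction n with
  | zero =>
    apply Set.Finite.subset (Set.finite_singleton v)
    rintro u ⟨hr, hd⟩
    have h0 : G.dist v u = 0 := Nat.le_zero.mp hd
    simp [(hr.dist_eq_zero_iff.mp h0).symm]
  | succ n ih =>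
    apply Set.Finite.subset (ih.union (Set.Finite.biUnion ih (fun w _ => hlf w)))
    rintro u ⟨hr, hd⟩
    rcases Nat.lt_or_ge n (G.dist v u) with h | h
    · have hd' : G.dist v u = n + 1 := le_antisymm hd h
      obtain ⟨w, hadj, hrw, hdw⟩ := exists_adj_of_dist_eq hr hd'
      exact Set.mem_union_right _ (Set.mem_biUnion ⟨hrw, hdw⟩ hadj.symm)
    · exact Set.mem_union_left _ ⟨hr, h⟩

lemma gball_connected {V : Type*} (G : SimpleGraph V) (v : V) (n : ℕ) :
    (G.induce (gball G v n)).Connected := by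
  have hv := mem_gball_self G v n
  have key : ∀ k, ∀ u, ∀ hu : u ∈ gball G v n, G.dist v u ≤ k →
      (G.induce (gball G v n)).Reachable ⟨v, hv⟩ ⟨u, hu⟩ := by
    intro k
    induction k with
    | zero =>
      intro u hu hd
      have : v = u := hu.1.dist_eq_zero_iff.mp (Nat.le_zero.mp hd)
      subst this
      exact Reachable.refl _
    | succ k ih =>
      intro u hu hd
      rcases le_or_gt (G.dist v u) k with h | h
      · exact ih u hu h
      · have hd' : G.dist v u = k + 1 := le_antisymm hd h
        obtain ⟨w, hadj, hrw, hdw⟩ := exists_adj_of_dist_eq hu.1 hd'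
        have hun := hu.2
        have hw : w ∈ gball G v n := ⟨hrw, hdw.trans (by omega)⟩
        have hadj' : (G.induce (gball G v n)).Adj ⟨w, hw⟩ ⟨u, hu⟩ := by
          simpa using hadj.symm
        exact (ih w hw hdw).trans hadj'.reachable
  have hprec : (G.induce (gball G v n)).Preconnected := by
    rintro ⟨a, ha⟩ ⟨b, hb⟩
    exact (key _ a ha le_rfl).symm.trans (key _ b hb le_rfl)
  haveI : Nonempty ↑(gball G v n) := ⟨⟨v, hv⟩⟩
  exact ⟨hprec⟩

lemma graphBoundary_gball_subset {V : Type*} (G : SimpleGraph V) (v : V) (n : ℕ) :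
    graphBoundary G (gball G v n) ⊆ gball G v (n + 1) \ gball G v n := by
  rintro u ⟨hu, w, hw, hadj⟩
  refine ⟨⟨hw.1.trans hadj.symm.reachable, ?_⟩, hu⟩
  obtain ⟨p, hp⟩ := hw.1.exists_walk_length_eq_dist
  have h1 := SimpleGraph.dist_le (p.concat hadj.symm)
  simp only [SimpleGraph.Walk.length_concat, hp] at h1
  have h2 := hw.2
  omega

theorem amenable_of_polyGrowth
    {V : Type*} [Infinite V] (G : SimpleGraph V) (hconn : G.Connected)
    (hlf : ∀ v : V, (G.neighborSet v).Finite)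
    (C : ℝ) (d : ℕ)
    (hgrowth : ∀ (v : V) (n : ℕ), ((gball G v n).ncard : ℝ) ≤ C * (n + 1) ^ d) :
    GraphAmenable G := by
  intro ε hε
  by_contra hcon
  push_neg at hcon
  have v : V := Classical.arbitrary V
  have hfin : ∀ n, (gball G v n).Finite := gball_finite hlf v
  have hne : ∀ n, (gball G v n).Nonempty := fun n => ⟨v, mem_gball_self G v n⟩
  -- counting: |B_n| + |∂B_n| ≤ |B_{n+1}|
  have hcard : ∀ n, (gball G v n).ncard + (graphBoundary G (gball G v n)).ncard
      ≤ (gball G v (n + 1)).ncard := by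
    intro n
    have hbd := graphBoundary_gball_subset G v n
    have hbdfin : (graphBoundary G (gball G v n)).Finite :=
      (hfin (n + 1)).subset (hbd.trans Set.diff_subset)
    have hdisj : Disjoint (gball G v n) (graphBoundary G (gball G v n)) :=
      Set.disjoint_right.mpr fun _ h => h.1
    rw [← Set.ncard_union_eq hdisj (hfin n) hbdfin]
    refine Set.ncard_le_ncard ?_ (hfin (n + 1))
    refine Set.union_subset (fun u hu => ⟨hu.1, hu.2.trans (Nat.le_succ n)⟩) ?_
    exact hbd.trans Set.diff_subset
  -- geometric growth
  have hstep : ∀ n, (1 + ε) * ((gball G v n).ncard : ℝ)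
      ≤ ((gball G v (n + 1)).ncard : ℝ) := by
    intro n
    have h1 := hcon (gball G v n) (hfin n) (hne n) (gball_connected G v n)
    have h2 : ((gball G v n).ncard : ℝ) + ((graphBoundary G (gball G v n)).ncard : ℝ)
        ≤ ((gball G v (n + 1)).ncard : ℝ) := by
      exact_mod_cast hcard n
    linarith
  have hgeo : ∀ n, (1 + ε) ^ n ≤ ((gball G v n).ncard : ℝ) := by
    intro n
    induction n with
    | zero =>
      simp only [pow_zero]
      exact_mod_cast (Set.ncard_pos (hfin 0)).mpr (hne 0)
    | succ n ih =>
      calc (1 + ε) ^ (n + 1) = (1 + ε) * (1 + ε) ^ n := by ring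
        _ ≤ (1 + ε) * ((gball G v n).ncard : ℝ) :=
            mul_le_mul_of_nonneg_left ih (by linarith)
        _ ≤ _ := hstep n
  -- beat the polynomial
  set C' : ℝ := max C 1 with hC'def
  have hC' : 0 < C' := lt_of_lt_of_le one_pos (le_max_right C 1)
  have hgrowth' : ∀ n : ℕ, ((gball G v n).ncard : ℝ) ≤ C' * (n + 1) ^ d := by
    intro n
    refine (hgrowth v n).trans ?_
    exact mul_le_mul_of_nonneg_right (le_max_left C 1) (by positivity)
  have hrpos : (0 : ℝ) < (1 + ε)⁻¹ := by positivity
  have hrlt : ‖(1 + ε)⁻¹‖ < 1 := by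
    rw [Real.norm_eq_abs, abs_of_pos hrpos]
    exact inv_lt_one_of_one_lt₀ (by linarith)
  have htend := (summable_pow_mul_geometric_of_norm_lt_one d hrlt).tendsto_atTop_zero
  have htend2 : Tendsto (fun n : ℕ => ((n : ℝ) + 1) ^ d * ((1 + ε)⁻¹) ^ (n + 1))
      atTop (nhds 0) := by
    have := htend.comp (tendsto_add_atTop_nat 1)
    convert this using 2 with n
    simp [Function.comp]
  have htend3 : Tendsto (fun n : ℕ => ((n : ℝ) + 1) ^ d * ((1 + ε)⁻¹) ^ n)
      atTop (nhds 0) := by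
    have h := htend2.const_mul (1 + ε)
    rw [mul_zero] at h
    refine h.congr fun n => ?_
    have h1 : (1 + ε) ≠ 0 := by linarith
    field_simp
    linear_combination (1 + ε)⁻¹ ^ n * mul_inv_cancel₀ h1
  have hev := htend3.eventually (gt_mem_nhds (by positivity : (0 : ℝ) < 1 / C'))
  obtain ⟨n, hn⟩ := hev.exists
  have hbpos : (0 : ℝ) < (1 + ε) ^ n := by positivity
  have hkey : C' * ((n : ℝ) + 1) ^ d < (1 + ε) ^ n := by
    have hn' : ((n : ℝ) + 1) ^ d / (1 + ε) ^ n < 1 / C' := by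
      rwa [div_eq_mul_inv, ← inv_pow]
    have := (div_lt_div_iff₀ hbpos hC').mp hn'
    linarith
  exact absurd ((hgeo n).trans_lt ((hgrowth' n).trans_lt hkey)) (lt_irrefl _)
end
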